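/- arXiv:2103.10318 — 3 statements merged into one kernel-verified Lean document; each statement's English description precedes it below -/
import Mathlib

section
/- Let $M \in \mathbb{R}^{4\times 6}$ be the hexrotor actuation matrix with rows $(1,1,1,1,1,1)$, $(-r/2, -r, -r/2, r/2, r, r/2)$, $(r\sqrt{3}/2, 0, -r\sqrt{3}/2, -r\sqrt{3}/2, 0, r\sqrt{3}/2)$, $(c, -c, c, -c, c, -c)$ with $r, c > 0$. For each $i \in \{1,\dots,6\}$, let $\mathcal{F}^{(i)} = \mathrm{diag}(d_1,\dots,d_6)$ with $d_j = 0$ if $j = i$ and $d_j = 1$ otherwise. Then $M\mathcal{F}^{(i)}$ has rank 4. -/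
/-- The hexrotor actuation matrix. -/
noncomputable def Mhex (r c : ℝ) : Matrix (Fin 4) (Fin 6) ℝ :=
  Matrix.of
    ![![1, 1, 1, 1, 1, 1],
      ![-r / 2, -r, -r / 2, r / 2, r, r / 2],
      ![r * Real.sqrt 3 / 2, 0, -(r * Real.sqrt 3 / 2),
        -(r * Real.sqrt 3 / 2), 0, r * Real.sqrt 3 / 2],
      ![c, -c, c, -c, c, -c]]

/-- The single-rotor failure matrix `𝓕⁽ⁱ⁾`. -/
noncomputable def Fm (i : Fin 6) : Matrix (Fin 6) (Fin 6) ℝ :=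
  Matrix.diagonal fun j => if j = i then 0 else 1

/-!
Losing rotor `i` still leaves the four rotors `i + 1, …, i + 4` (cyclically). Their columns of
`Mhex r c` form a `4 × 4` block of determinant `± 3 √3 r² c ≠ 0`, which `Fm i` does not touch,
so `Mhex r c * Fm i` has four independent columns.
-/

namespace Matrix

variable {m n o K : Type*}

theorem submatrix_mul_diagonal_of_forall_eq_one [Fintype n] [DecidableEq n] [Semiring K]
    (A : Matrix m n K) {d : n → K} {g : o → n} (hg : ∀ k, d (g k) = 1) :
    (A * diagonal d).submatrix id g = A.submatrix id g := by
  ext a k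
  simp [mul_diagonal, hg]

theorem rank_eq_card_height_of_det_submatrix_ne_zero [Fintype m] [DecidableEq m] [Fintype n]
    [Field K] (A : Matrix m n K) (g : m → n) (hdet : (A.submatrix id g).det ≠ 0) :
    A.rank = Fintype.card m := by
  refine le_antisymm A.rank_le_card_height ?_
  calc Fintype.card m = (A.submatrix id g).rank :=
        (rank_of_isUnit _ ((isUnit_iff_isUnit_det _).2 hdet.isUnit)).symm
    _ ≤ A.rank := rank_submatrix_le A id g

end Matrix

def rotorsAfter (i : Fin 6) (k : Fin 4) : Fin 6 := i + 1 + Fin.castLE (by norm_num) k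

theorem rotorsAfter_ne (i : Fin 6) (k : Fin 4) : rotorsAfter i k ≠ i := by
  revert i k
  decide

theorem det_Mhex_submatrix_rotorsAfter (r c : ℝ) (i : Fin 6) :
    ((Mhex r c).submatrix id (rotorsAfter i)).det = (-1) ^ (i : ℕ) * (3 * √3 * r ^ 2 * c) := by
  fin_cases i <;>
    simp [rotorsAfter, Mhex, Matrix.det_succ_row_zero, Fin.sum_univ_succ] <;>
    simp [Fin.succAbove, Fin.lt_def] <;>
    ring

theorem Mhex_mul_Fm_submatrix_rotorsAfter (r c : ℝ) (i : Fin 6) :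
    (Mhex r c * Fm i).submatrix id (rotorsAfter i) = (Mhex r c).submatrix id (rotorsAfter i) :=
  Matrix.submatrix_mul_diagonal_of_forall_eq_one _ fun k => if_neg (rotorsAfter_ne i k)

/-- With any single actuator removed, the actuation map remains surjective. -/
theorem stmt9 (r c : ℝ) (hr : 0 < r) (hc : 0 < c) (i : Fin 6) :
    (Mhex r c * Fm i).rank = 4 := by
  have hdet : ((Mhex r c * Fm i).submatrix id (rotorsAfter i)).det ≠ 0 := by
    rw [Mhex_mul_Fm_submatrix_rotorsAfter, det_Mhex_submatrix_rotorsAfter]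
    exact mul_ne_zero (pow_ne_zero _ (by norm_num)) (by positivity)
  simpa using Matrix.rank_eq_card_height_of_det_submatrix_ne_zero _ _ hdet
end

section
/- With $M$ and $\mathcal{F}^{(i)}$ as above ($r, c > 0$, single-rotor failure matrix), for each $i \in \{1,\dots,6\}$ the matrix $(M\mathcal{F}^{(i)})(M\mathcal{F}^{(i)})^\top \in \mathbb{R}^{4\times 4}$ is invertible, so the pseudo-inverse $(M\mathcal{F}^{(i)})^\dagger = (M\mathcal{F}^{(i)})^\top((M\mathcal{F}^{(i)})(M\mathcal{F}^{(i)})^\top)^{-1}$ is well defined and satisfies $(M\mathcal{F}^{(i)})(M\mathcal{F}^{(i)})^\dagger = I_4$. -/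
open Matrix

/-!
Removing rotor `i` deletes the rank-one term `mᵢ mᵢᵀ` from the Gram matrix `M Mᵀ`, where `mᵢ` is
the `i`-th column of `M`; for the hexrotor `M Mᵀ = diag(6, 3r², 3r², 6c²)`. By the matrix
determinant lemma `det (M Mᵀ - mᵢ mᵢᵀ) = det (M Mᵀ) (1 - mᵢᵀ (M Mᵀ)⁻¹ mᵢ)`, and since every rotor
sits at distance `r` from the centre, `mᵢᵀ (M Mᵀ)⁻¹ mᵢ = 1/6 + r²/(3r²) + c²/(6c²) = 2/3` for every
`i`. Hence the reduced Gram matrix has determinant `108 r⁴ c² ≠ 0`.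
-/

namespace Matrix

variable {m n K : Type*} [Fintype m]

theorem mul_transpose_mul_inv_eq_one [Fintype n] [DecidableEq m] [CommRing K] {A : Matrix m n K}
    (h : IsUnit (A * Aᵀ).det) : A * (Aᵀ * (A * Aᵀ)⁻¹) = 1 := by
  rw [← Matrix.mul_assoc]
  exact mul_nonsing_inv _ h

theorem mul_diagonal_ite_zero_one_mul_transpose [DecidableEq m] [CommRing K]
    (A : Matrix n m K) (i : m) :
    A * diagonal (fun j => if j = i then (0 : K) else 1) *
        (A * diagonal (fun j => if j = i then (0 : K) else 1))ᵀ
      = A * Aᵀ - vecMulVec (fun a => A a i) (fun a => A a i) := by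
  ext a b
  rw [mul_apply]
  simp only [transpose_apply, mul_diagonal, mul_ite, mul_zero, mul_one, sub_apply,
    vecMulVec_apply]
  simp [mul_apply, Finset.sum_ite, Finset.filter_ne', Finset.sum_erase_eq_sub]

theorem det_diagonal_sub_vecMulVec_self [DecidableEq m] [Field K] {d : m → K}
    (hd : ∀ k, d k ≠ 0) (v : m → K) :
    (diagonal d - vecMulVec v v).det = (∏ k, d k) * (1 - ∑ k, v k ^ 2 / d k) := by
  have hdet : IsUnit (diagonal d).det := by
    rw [det_diagonal]
    exact isUnit_iff_ne_zero.2 (Finset.prod_ne_zero_iff.2 fun k _ => hd k)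
  have hinv : (diagonal d)⁻¹ = diagonal d⁻¹ := by
    refine inv_eq_left_inv ?_
    rw [diagonal_mul_diagonal, ← diagonal_one]
    exact congrArg diagonal (funext fun k => inv_mul_cancel₀ (hd k))
  rw [sub_eq_add_neg, ← neg_vecMulVec, vecMulVec_eq Unit,
    det_add_replicateCol_mul_replicateRow hdet, det_diagonal, det_unique, hinv]
  congr 1
  simp [mul_apply, replicateRow, replicateCol, div_eq_mul_inv, sub_eq_add_neg, diagonal_apply,
    sq, mul_right_comm]

end Matrix

theorem Mhex_mul_transpose (r c : ℝ) :
    Mhex r c * (Mhex r c)ᵀ = diagonal ![6, 3 * r ^ 2, 3 * r ^ 2, 6 * c ^ 2] := by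
  have h3 : Real.sqrt 3 * Real.sqrt 3 = 3 := Real.mul_self_sqrt (by norm_num)
  ext a b
  fin_cases a <;> fin_cases b <;>
    simp [Mhex, mul_apply, Fin.sum_univ_six, diagonal] <;> nlinarith [h3]

theorem Mhex_arm_sq (r c : ℝ) (i : Fin 6) : Mhex r c 1 i ^ 2 + Mhex r c 2 i ^ 2 = r ^ 2 := by
  have h3 : Real.sqrt 3 ^ 2 = 3 := Real.sq_sqrt (by norm_num)
  fin_cases i <;> simp [Mhex] <;> linear_combination (r ^ 2 / 4) * h3

theorem sum_Mhex_col_sq_div {r c : ℝ} (hr : r ≠ 0) (hc : c ≠ 0) (i : Fin 6) :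
    ∑ k, Mhex r c k i ^ 2 / ![6, 3 * r ^ 2, 3 * r ^ 2, 6 * c ^ 2] k = 2 / 3 := by
  have hthrust : Mhex r c 0 i = 1 := by fin_cases i <;> rfl
  have hdrag : Mhex r c 3 i ^ 2 = c ^ 2 := by fin_cases i <;> simp [Mhex]
  have hplane : Mhex r c 1 i ^ 2 / (3 * r ^ 2) + Mhex r c 2 i ^ 2 / (3 * r ^ 2) = 1 / 3 := by
    rw [← add_div, Mhex_arm_sq]
    field_simp
  have hyaw : c ^ 2 / (6 * c ^ 2) = 1 / 6 := by field_simp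
  simp only [Fin.sum_univ_four, hthrust, hdrag, hyaw, Matrix.cons_val]
  linarith

theorem isUnit_det_Mhex_Fm_mul_transpose {r c : ℝ} (hr : r ≠ 0) (hc : c ≠ 0) (i : Fin 6) :
    IsUnit (Mhex r c * Fm i * (Mhex r c * Fm i)ᵀ).det := by
  have hd : ∀ k : Fin 4, ![6, 3 * r ^ 2, 3 * r ^ 2, 6 * c ^ 2] k ≠ 0 := by
    intro k
    fin_cases k <;> simp [hr, hc]
  rw [Fm, mul_diagonal_ite_zero_one_mul_transpose, Mhex_mul_transpose,
    det_diagonal_sub_vecMulVec_self hd, sum_Mhex_col_sq_div hr hc]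
  exact isUnit_iff_ne_zero.2
    (mul_ne_zero (Finset.prod_ne_zero_iff.2 fun k _ => hd k) (by norm_num))

/-- The pseudo-inverse of `M𝓕⁽ⁱ⁾` is well defined and is a right inverse. -/
theorem stmt10 (r c : ℝ) (hr : 0 < r) (hc : 0 < c) (i : Fin 6) :
    IsUnit (Mhex r c * Fm i * (Mhex r c * Fm i)ᵀ) ∧
    (Mhex r c * Fm i) *
      ((Mhex r c * Fm i)ᵀ * (Mhex r c * Fm i * (Mhex r c * Fm i)ᵀ)⁻¹) = 1 := by
  have hdet := isUnit_det_Mhex_Fm_mul_transpose hr.ne' hc.ne' i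
  exact ⟨(isUnit_iff_isUnit_det _).2 hdet, mul_transpose_mul_inv_eq_one hdet⟩
end

section
/- Let $M \in \mathbb{R}^{4\times 6}$ be the hexrotor actuation matrix as above with $r, c > 0$, and for $i \in \{1,2,3\}$ let $\mathcal{F}$ be the diagonal matrix zeroing out columns $i$ and $i+3$ (the failed rotor and the rotor opposite it). Then the torque submatrix (rows 2–4 of $M\mathcal{F}$) has rank at most 2; in particular the linearized attitude system $\dot\theta = A\theta + bBM\mathcal{F}\omega_s$ is not controllable. -/
/-!
Opposite rotors of the hexrotor produce opposite torques: column `j + 3` of the torque rows of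
`Mhex` is minus column `j`. After disabling rotor `i` and its opposite, every column of the
torque matrix (even after multiplying on the left by `J⁻¹`) is, up to sign, a column of a
`3 × 3` matrix whose `i`-th column vanishes. That matrix has determinant zero, so a nonzero
covector `u` annihilates all torques. Then `(0, u)` annihilates both the double-integrator drift
`A` and the input matrix `B = (0; b J⁻¹ T)`, hence every block `A ^ k * B` of the Kalman matrix.
-/

open Matrix

/-- The failure matrix zeroing out the failed rotor `i` and the rotor `i+3`
opposite it. -/
noncomputable def Fopp (i : Fin 3) : Matrix (Fin 6) (Fin 6) ℝ :=
  Matrix.diagonal fun j => if (j : ℕ) = (i : ℕ) ∨ (j : ℕ) = (i : ℕ) + 3 then 0 else 1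

/-- Torque submatrix (rows 2–4) of `M𝓕`. -/
noncomputable def Tq (r c : ℝ) (i : Fin 3) : Matrix (Fin 3) (Fin 6) ℝ :=
  Matrix.of fun k j => (Mhex r c * Fopp i) k.succ j

namespace Matrix

variable {K : Type*} [Field K] {m n : Type*} [Fintype m] [Fintype n]

theorem rank_lt_card_height_of_vecMul_eq_zero {M : Matrix m n K} {v : m → K} (hv : v ≠ 0)
    (h : v ᵥ* M = 0) : M.rank < Fintype.card m := by
  have hker : v ∈ LinearMap.ker Mᵀ.mulVecLin := by
    simpa [mulVec_transpose] using h
  have hker_pos : 0 < Module.finrank K (LinearMap.ker Mᵀ.mulVecLin) :=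
    Module.finrank_pos_iff_exists_ne_zero.mpr ⟨⟨v, hker⟩, by simpa using hv⟩
  have hrank_nullity := LinearMap.finrank_range_add_finrank_ker Mᵀ.mulVecLin
  rw [← rank_transpose, rank, ← Module.finrank_fintype_fun_eq_card K]
  omega

theorem exists_vecMul_eq_zero_of_antipodal_cols {p : ℕ} (M : Matrix (Fin p) (Fin (p + p)) K)
    (hneg : ∀ k j, M k (Fin.natAdd p j) = -M k (Fin.castAdd p j)) (i : Fin p)
    (hi : ∀ k, M k (Fin.castAdd p i) = 0) : ∃ v ≠ 0, v ᵥ* M = 0 := by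
  have hdet : (M.submatrix id (Fin.castAdd p)).det = 0 := det_eq_zero_of_column_eq_zero i hi
  obtain ⟨v, hv, hvM⟩ := exists_vecMul_eq_zero_iff.mpr hdet
  refine ⟨v, hv, funext fun j => Fin.addCases (fun j => congrFun hvM j) (fun j => ?_) j⟩
  have hnat : (v ᵥ* M) (Fin.natAdd p j) = -(v ᵥ* M.submatrix id (Fin.castAdd p)) j := by
    simp only [vecMul, dotProduct, submatrix_apply, id, hneg, mul_neg, Finset.sum_neg_distrib]
  rw [hnat, hvM, Pi.zero_apply, neg_zero, Pi.zero_apply]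

end Matrix

section Kalman

variable {R : Type*} [CommRing R] {m n : Type*} [Fintype m] [DecidableEq m]

def kalmanMatrix (A : Matrix m m R) (B : Matrix m n R) (N : ℕ) : Matrix m (Fin N × n) R :=
  of fun x p => (A ^ (p.1 : ℕ) * B) x p.2

theorem vecMul_kalmanMatrix_eq_zero {A : Matrix m m R} {B : Matrix m n R} {w : m → R}
    (hA : w ᵥ* A = 0) (hB : w ᵥ* B = 0) (N : ℕ) : w ᵥ* kalmanMatrix A B N = 0 := by
  have hpow : ∀ k, w ᵥ* (A ^ k * B) = 0
    | 0 => by rwa [pow_zero, Matrix.one_mul]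
    | k + 1 => by rw [pow_succ', Matrix.mul_assoc, ← vecMul_vecMul, hA, zero_vecMul]
  funext p
  exact congrFun (hpow p.1) p.2

theorem sumElim_zero_vecMul_fromBlocks_zero_one_zero_zero (u : m → R) :
    Sum.elim 0 u ᵥ* fromBlocks (0 : Matrix m m R) (1 : Matrix m m R) 0 0 = 0 := by
  simp [vecMul_fromBlocks]

end Kalman

theorem Mhex_succ_natAdd (r c : ℝ) (k j : Fin 3) :
    Mhex r c k.succ (Fin.natAdd 3 j) = -Mhex r c k.succ (Fin.castAdd 3 j) := by
  fin_cases k <;> fin_cases j <;> simp [Mhex, neg_div]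

theorem Tq_apply (r c : ℝ) (i k : Fin 3) (j : Fin 6) :
    Tq r c i k j = Mhex r c k.succ j * if (j : ℕ) = i ∨ (j : ℕ) = i + 3 then 0 else 1 := by
  simp [Tq, Fopp, mul_diagonal]

theorem Tq_natAdd (r c : ℝ) (i k j : Fin 3) :
    Tq r c i k (Fin.natAdd 3 j) = -Tq r c i k (Fin.castAdd 3 j) := by
  have hfail : ((3 + j : ℕ) = i ∨ (3 + j : ℕ) = i + 3) ↔ ((j : ℕ) = i ∨ (j : ℕ) = i + 3) := by
    omega
  simp only [Tq_apply, Fin.val_natAdd, Fin.val_castAdd, hfail, Mhex_succ_natAdd, neg_mul]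

theorem Tq_castAdd_self (r c : ℝ) (i k : Fin 3) : Tq r c i k (Fin.castAdd 3 i) = 0 := by
  simp [Tq_apply]

theorem exists_vecMul_mul_Tq_eq_zero (r c : ℝ) (i : Fin 3) (L : Matrix (Fin 3) (Fin 3) ℝ) :
    ∃ u ≠ 0, u ᵥ* (L * Tq r c i) = 0 :=
  exists_vecMul_eq_zero_of_antipodal_cols _
    (fun k j => by simp only [mul_apply, Tq_natAdd, mul_neg, Finset.sum_neg_distrib]) i
    (fun k => by simp [mul_apply, Tq_castAdd_self])

theorem stmt13_general (r c b : ℝ)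
    (J : Matrix (Fin 3) (Fin 3) ℝ) (i : Fin 3) :
    (Tq r c i).rank ≤ 2 ∧
    (Matrix.of fun (x : Fin 3 ⊕ Fin 3) (p : Fin 6 × Fin 6) =>
        (((Matrix.fromBlocks (0 : Matrix (Fin 3) (Fin 3) ℝ) 1 0 0) ^ (p.1 : ℕ) *
            (b • Matrix.fromRows (0 : Matrix (Fin 3) (Fin 6) ℝ)
              (J⁻¹ * Tq r c i)) :
          Matrix (Fin 3 ⊕ Fin 3) (Fin 6) ℝ)) x p.2).rank < 6 := by
  constructor
  · obtain ⟨v, hv, hvT⟩ := exists_vecMul_mul_Tq_eq_zero r c i 1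
    rw [Matrix.one_mul] at hvT
    exact Nat.le_of_lt_succ (by simpa using rank_lt_card_height_of_vecMul_eq_zero hv hvT)
  · obtain ⟨u, hu, huT⟩ := exists_vecMul_mul_Tq_eq_zero r c i J⁻¹
    have hw : (Sum.elim 0 u : Fin 3 ⊕ Fin 3 → ℝ) ≠ 0 := fun h =>
      hu (funext fun k => congrFun h (Sum.inr k))
    have hB :
        Sum.elim 0 u ᵥ* (b • fromRows (0 : Matrix (Fin 3) (Fin 6) ℝ) (J⁻¹ * Tq r c i)) = 0 := by
      rw [vecMul_smul, sumElim_vecMul_fromRows, huT, vecMul_zero, zero_add, smul_zero]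
    have hrank := rank_lt_card_height_of_vecMul_eq_zero hw
      (vecMul_kalmanMatrix_eq_zero (sumElim_zero_vecMul_fromBlocks_zero_one_zero_zero u) hB 6)
    rw [Fintype.card_sum, Fintype.card_fin] at hrank
    exact hrank

/-- Disabling the opposite rotor as well loses torque authority: the torque
submatrix has rank at most `2` and the linearized attitude system is not
controllable. -/
theorem stmt13 (r c b : ℝ) (hr : 0 < r) (hc : 0 < c) (hb : 0 < b)
    (J : Matrix (Fin 3) (Fin 3) ℝ) (hJ : IsUnit J) (i : Fin 3) :
    (Tq r c i).rank ≤ 2 ∧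
    (Matrix.of fun (x : Fin 3 ⊕ Fin 3) (p : Fin 6 × Fin 6) =>
        (((Matrix.fromBlocks (0 : Matrix (Fin 3) (Fin 3) ℝ) 1 0 0) ^ (p.1 : ℕ) *
            (b • Matrix.fromRows (0 : Matrix (Fin 3) (Fin 6) ℝ)
              (J⁻¹ * Tq r c i)) :
          Matrix (Fin 3 ⊕ Fin 3) (Fin 6) ℝ)) x p.2).rank < 6 :=
  stmt13_general r c b J i
end
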